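/- Let g be the Lie algebra s_{4,3}^{-1/2,-1/2} × R² with structure equations (e^{14}, -½ e^{24}, -½ e^{34}, 0, 0, 0), i.e., nonzero brackets [e1,e4] = -e1, [e2,e4] = ½ e2, [e3,e4] = ½ e3. Then g admits no complex structure J with Koszul 1-form vanishing on [g,g]: there is no endomorphism J with J² = -Id, Nijenhuis tensor N_J ≡ 0, and ψ([g,g]) = 0, where ψ(x) = Tr(J∘ad x) - Tr(ad(Jx)). -/
import Mathlib


namespace Stmt14

abbrev V : Type := Fin 6 → ℝ

/-- standard basis -/
noncomputable def e (i : Fin 6) : V := Pi.single i 1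

/-- the Lie bracket -/
noncomputable def br (x y : V) : V := fun k =>
  match k with
  | 0 => -(x 0 * y 3 - x 3 * y 0)
  | 1 => (1 / 2) * (x 1 * y 3 - x 3 * y 1)
  | 2 => (1 / 2) * (x 2 * y 3 - x 3 * y 2)
  | 3 => 0
  | 4 => 0
  | 5 => 0

/-- the adjoint operator `ad x = [x, ·]` as a linear endomorphism -/
noncomputable def ad (x : V) : V →ₗ[ℝ] V where
  toFun := br x
  map_add' := by intro a b; funext k; fin_cases k <;> simp [br] <;> ring
  map_smul' := by intro c a; funext k; fin_cases k <;> simp [br] <;> ring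

/-- the Nijenhuis tensor of an endomorphism `J` -/
noncomputable def nijenhuis (J : V →ₗ[ℝ] V) (x y : V) : V :=
  br x y + J (br (J x) y + br x (J y)) - br (J x) (J y)

/-- the Koszul 1-form `ψ(x) = Tr(J ∘ ad x) - Tr(ad (J x))` -/
noncomputable def psi (J : V →ₗ[ℝ] V) (x : V) : ℝ :=
  LinearMap.trace ℝ V (J ∘ₗ ad x) - LinearMap.trace ℝ V (ad (J x))

lemma no_anti_involution_fin3 (M : Matrix (Fin 3) (Fin 3) ℝ) (h : M * M = -1) : False := by
  have h2 := congrArg Matrix.det h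
  rw [Matrix.det_mul] at h2
  have h3 : (-1 : Matrix (Fin 3) (Fin 3) ℝ).det = -1 := by
    simp [Matrix.det_fin_three, Matrix.neg_apply, Matrix.one_apply]
  rw [h3] at h2
  nlinarith [sq_nonneg M.det]

set_option maxHeartbeats 2000000 in
theorem stmt_14' :
    ¬ ∃ J : V →ₗ[ℝ] V,
        (∀ x : V, J (J x) = -x) ∧ (∀ x y : V, nijenhuis J x y = 0) ∧
        psi J (e 0) = 0 ∧ psi J (e 1) = 0 ∧ psi J (e 2) = 0 := by
  rintro ⟨J, hJ2, hN, hp0, hp1, hp2⟩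
  obtain ⟨a, ha⟩ : ∃ a : Fin 6 → V, ∀ j, J (e j) = a j := ⟨fun j => J (e j), fun _ => rfl⟩
  have hrep : ∀ (v : V), J v = ∑ j : Fin 6, v j • J (e j) := by
    intro v
    have hv : v = ∑ j : Fin 6, v j • e j := by
      funext k; simp [e, Finset.sum_apply, Pi.single_apply]
    conv_lhs => rw [hv]
    simp [map_sum]
  have hJ : ∀ (v : V) (k : Fin 6), J v k = ∑ j : Fin 6, v j * a j k := by
    intro v k
    rw [hrep]
    simp [ha, Finset.sum_apply]
  -- psi equations : a j 3 = 0 for j = 0,1,2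
  have hpsi : ∀ j : Fin 6, psi J (e j) =
      LinearMap.trace ℝ V (J ∘ₗ ad (e j)) - LinearMap.trace ℝ V (ad (J (e j))) := fun _ => rfl
  have htr : ∀ x : V, LinearMap.trace ℝ V (J ∘ₗ ad x) - LinearMap.trace ℝ V (ad (J x)) =
      (∑ i : Fin 6, J (br x (e i)) i) - (∑ i : Fin 6, br (J x) (e i) i) := by
    intro x
    rw [LinearMap.trace_eq_matrix_trace ℝ (Pi.basisFun ℝ (Fin 6)),
        LinearMap.trace_eq_matrix_trace ℝ (Pi.basisFun ℝ (Fin 6))]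
    simp [Matrix.trace, Matrix.diag, LinearMap.toMatrix_apply, ad, e]
  rw [hpsi, htr] at hp0 hp1 hp2
  simp only [Fin.sum_univ_six, hJ, ha, br, e, Pi.single_apply, Fin.reduceEq, reduceIte,
    Fin.sum_univ_six] at hp0 hp1 hp2
  norm_num at hp0 hp1 hp2
  have h03 : a 0 3 = 0 := by linarith
  have h13 : a 1 3 = 0 := by linarith
  have h23 : a 2 3 = 0 := by linarith
  -- Nijenhuis product equations
  have NP : ∀ (s j r : Fin 6), a s 3 * a j r = 0 ∨ True := fun _ _ _ => Or.inr trivial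
  have P404 := congrFun (hN (e 4) (e 0)) 4
  have P405 := congrFun (hN (e 4) (e 0)) 5
  have P414 := congrFun (hN (e 4) (e 1)) 4
  have P415 := congrFun (hN (e 4) (e 1)) 5
  have P424 := congrFun (hN (e 4) (e 2)) 4
  have P425 := congrFun (hN (e 4) (e 2)) 5
  have P504 := congrFun (hN (e 5) (e 0)) 4
  have P505 := congrFun (hN (e 5) (e 0)) 5
  have P514 := congrFun (hN (e 5) (e 1)) 4
  have P515 := congrFun (hN (e 5) (e 1)) 5
  have P524 := congrFun (hN (e 5) (e 2)) 4
  have P525 := congrFun (hN (e 5) (e 2)) 5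
  simp only [nijenhuis, Pi.add_apply, Pi.sub_apply, Pi.zero_apply, hJ, ha,
    Fin.sum_univ_six, br, e, Pi.single_apply, Fin.reduceEq, reduceIte]
    at P404 P405 P414 P415 P424 P425 P504 P505 P514 P515 P524 P525
  norm_num at P404 P405 P414 P415 P424 P425 P504 P505 P514 P515 P524 P525
  -- J² = -1 at (3,3)
  have Q33 := congrFun (hJ2 (e 3)) 3
  simp only [hJ, ha, Fin.sum_univ_six, e, Pi.single_apply, Fin.reduceEq, reduceIte,
    Pi.neg_apply] at Q33
  norm_num [h03, h13, h23] at Q33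
  -- the rows 4,5 of J vanish on span{e0,e1,e2}
  have hC : a 0 4 = 0 ∧ a 0 5 = 0 ∧ a 1 4 = 0 ∧ a 1 5 = 0 ∧ a 2 4 = 0 ∧ a 2 5 = 0 := by
    rcases eq_or_ne (a 4 3) 0 with h4 | h4
    · rcases eq_or_ne (a 5 3) 0 with h5 | h5
      · exfalso; rw [h4, h5] at Q33; nlinarith [Q33, sq_nonneg (a 3 3)]
      · exact ⟨P504.resolve_left h5, P505.resolve_left h5, P514.resolve_left h5,
          P515.resolve_left h5, P524.resolve_left h5, P525.resolve_left h5⟩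
    · exact ⟨P404.resolve_left h4, P405.resolve_left h4, P414.resolve_left h4,
        P415.resolve_left h4, P424.resolve_left h4, P425.resolve_left h4⟩
  obtain ⟨h04, h05, h14, h15, h24, h25⟩ := hC
  -- J² = -1 on span{e0,e1,e2}
  have Q00 := congrFun (hJ2 (e 0)) 0
  have Q01 := congrFun (hJ2 (e 1)) 0
  have Q02 := congrFun (hJ2 (e 2)) 0
  have Q10 := congrFun (hJ2 (e 0)) 1
  have Q11 := congrFun (hJ2 (e 1)) 1
  have Q12 := congrFun (hJ2 (e 2)) 1
  have Q20 := congrFun (hJ2 (e 0)) 2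
  have Q21 := congrFun (hJ2 (e 1)) 2
  have Q22 := congrFun (hJ2 (e 2)) 2
  simp only [hJ, ha, Fin.sum_univ_six, e, Pi.single_apply, Fin.reduceEq, reduceIte,
    Pi.neg_apply] at Q00 Q01 Q02 Q10 Q11 Q12 Q20 Q21 Q22
  norm_num [h03, h13, h23, h04, h05, h14, h15, h24, h25]
    at Q00 Q01 Q02 Q10 Q11 Q12 Q20 Q21 Q22
  -- assemble the 3×3 matrix and contradict
  apply no_anti_involution_fin3
    !![a 0 0, a 1 0, a 2 0; a 0 1, a 1 1, a 2 1; a 0 2, a 1 2, a 2 2]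
  ext i j
  fin_cases i <;> fin_cases j <;>
    simp [Matrix.mul_apply, Fin.sum_univ_three, Matrix.neg_apply, Matrix.one_apply] <;>
    linarith [Q00, Q01, Q02, Q10, Q11, Q12, Q20, Q21, Q22]

/-- `s_{4,3}^{-1/2,-1/2} × ℝ²` admits no complex structure whose Koszul
1-form vanishes on the commutator ideal `[g,g] = span{e1,e2,e3}`. -/
theorem stmt_14 :
    ¬ ∃ J : V →ₗ[ℝ] V,
        (∀ x : V, J (J x) = -x) ∧ (∀ x y : V, nijenhuis J x y = 0) ∧
        psi J (e 0) = 0 ∧ psi J (e 1) = 0 ∧ psi J (e 2) = 0 := by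
  exact stmt_14'

end Stmt14
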